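/- arXiv:0911.4462 — 8 statements merged into one kernel-verified Lean document; each statement's English description precedes it below -/
import Mathlib

section
/- Let M' and M'' be finite-dimensional vector spaces over a field, of dimensions d' and d'' respectively, and let φ: M' → M'' be a linear map of the maximal possible rank min(d', d''). Let e' and e'' be integers with 0 ≤ e' ≤ d' and 0 ≤ e'' ≤ d''. Then the following are equivalent: (1) there exist subspaces N' ⊆ M' and N'' ⊆ M'' with dim N' = e', dim N'' = e'', and φ(N') ⊆ N''; (2) e' − e'' ≤ max(d' − d'', 0). -/
open Module Submodule

lemma aux_exists_le_finrank_eq {K M : Type*} [Field K] [AddCommGroup M] [Module K M]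
    [FiniteDimensional K M] (p : Submodule K M) {n : ℕ} (hn : n ≤ finrank K p) :
    ∃ N : Submodule K M, N ≤ p ∧ finrank K N = n := by
  obtain ⟨f, hf⟩ := exists_linearIndependent_of_le_finrank (R := K) (M := p) hn
  refine ⟨(span K (Set.range f)).map p.subtype, Submodule.map_subtype_le _ _, ?_⟩
  rw [p.finrank_map_subtype_eq, finrank_span_eq_card hf, Fintype.card_fin]

lemma aux_exists_ge_finrank_eq {K M : Type*} [Field K] [AddCommGroup M] [Module K M]
    [FiniteDimensional K M] (p : Submodule K M) {n : ℕ} (h1 : finrank K p ≤ n)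
    (h2 : n ≤ finrank K M) :
    ∃ N : Submodule K M, p ≤ N ∧ finrank K N = n := by
  obtain ⟨q, hq⟩ := p.exists_isCompl
  have hpq : finrank K p + finrank K q = finrank K M :=
    Submodule.finrank_add_eq_of_isCompl hq
  obtain ⟨W, hWq, hW⟩ := aux_exists_le_finrank_eq q (n := n - finrank K p) (by omega)
  refine ⟨p ⊔ W, le_sup_left, ?_⟩
  have hinf : p ⊓ W = ⊥ := by
    rw [← le_bot_iff, ← hq.inf_eq_bot]
    exact inf_le_inf_left _ hWq
  have := Submodule.finrank_sup_add_finrank_inf_eq p W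
  rw [hinf, finrank_bot] at this
  omega

lemma aux_finrank_comap_subtype {K M : Type*} [Field K] [AddCommGroup M] [Module K M]
    [FiniteDimensional K M] (p q : Submodule K M) :
    finrank K (comap q.subtype p) = finrank K (p ⊓ q : Submodule K M) := by
  have h : comap q.subtype p = comap q.subtype (p ⊓ q) := by
    ext x; simp [x.2]
  rw [h]
  exact (Submodule.comapSubtypeEquivOfLe inf_le_right).finrank_eq

/-- Lemma (acceptable arrows): for a linear map `φ : M' → M''` of maximal possible rank
`min d' d''`, subspaces `N' ⊆ M'`, `N'' ⊆ M''` of dimensions `e'`, `e''` with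
`φ(N') ⊆ N''` exist iff `e' − e'' ≤ [d' − d'']₊`. -/
theorem stmt_0 {K M' M'' : Type*} [Field K]
    [AddCommGroup M'] [Module K M'] [AddCommGroup M''] [Module K M'']
    [FiniteDimensional K M'] [FiniteDimensional K M'']
    (φ : M' →ₗ[K] M'') (d' d'' : ℕ)
    (hd' : Module.finrank K M' = d') (hd'' : Module.finrank K M'' = d'')
    (hrank : Module.finrank K (LinearMap.range φ) = min d' d'')
    (e' e'' : ℤ) (he'0 : 0 ≤ e') (he'1 : e' ≤ (d' : ℤ))
    (he''0 : 0 ≤ e'') (he''1 : e'' ≤ (d'' : ℤ)) :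
    (∃ (N' : Submodule K M') (N'' : Submodule K M''),
        (Module.finrank K N' : ℤ) = e' ∧ (Module.finrank K N'' : ℤ) = e'' ∧
          N'.map φ ≤ N'') ↔
      e' - e'' ≤ max ((d' : ℤ) - (d'' : ℤ)) 0 := by
  -- dimension of the kernel
  have hrn := LinearMap.finrank_range_add_finrank_ker φ
  rw [hd', hrank] at hrn
  set k := finrank K (LinearMap.ker φ) with hk
  have hkval : (k : ℤ) = max ((d' : ℤ) - (d'' : ℤ)) 0 := by
    have h1 : min d' d'' ≤ d' := min_le_left _ _
    omega
  lift e' to ℕ using he'0 with a'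
  lift e'' to ℕ using he''0 with a''
  constructor
  · rintro ⟨N', N'', hN', hN'', hmap⟩
    have hrn2 := LinearMap.finrank_range_add_finrank_ker (φ.domRestrict N')
    rw [LinearMap.range_domRestrict, LinearMap.ker_domRestrict,
      aux_finrank_comap_subtype] at hrn2
    have h1 : finrank K (N'.map φ) ≤ finrank K N'' := Submodule.finrank_mono hmap
    have h2 : finrank K (LinearMap.ker φ ⊓ N' : Submodule K M') ≤ k :=
      Submodule.finrank_mono inf_le_left
    have hN'a : finrank K N' = a' := by exact_mod_cast hN'
    have hN''a : finrank K N'' = a'' := by exact_mod_cast hN''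
    omega
  · intro h
    have ha'd : a' ≤ d' := by exact_mod_cast he'1
    have ha''d : a'' ≤ d'' := by exact_mod_cast he''1
    by_cases hcase : a' ≤ k
    · -- take N' inside the kernel
      obtain ⟨N', hN'le, hN'⟩ := aux_exists_le_finrank_eq (LinearMap.ker φ) (n := a') hcase
      obtain ⟨N'', _, hN''⟩ := aux_exists_le_finrank_eq (⊤ : Submodule K M'')
        (n := a'') (by rw [finrank_top, hd'']; exact ha''d)
      refine ⟨N', N'', by exact_mod_cast hN', by exact_mod_cast hN'', ?_⟩
      rw [Submodule.map_le_iff_le_comap]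
      refine le_trans hN'le fun x hx => ?_
      simp [Submodule.mem_comap, LinearMap.mem_ker.mp hx]
    · -- take N' containing the kernel
      push_neg at hcase
      obtain ⟨N', hkerle, hN'⟩ := aux_exists_ge_finrank_eq (LinearMap.ker φ)
        (n := a') hcase.le (by rw [hd']; exact ha'd)
      have hrn2 := LinearMap.finrank_range_add_finrank_ker (φ.domRestrict N')
      rw [LinearMap.range_domRestrict, LinearMap.ker_domRestrict,
        aux_finrank_comap_subtype, inf_eq_left.mpr hkerle] at hrn2
      have hmax : a' - a'' ≤ k := by omega
      have hle : finrank K (N'.map φ) ≤ a'' := by omega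
      obtain ⟨N'', hN''ge, hN''⟩ := aux_exists_ge_finrank_eq (N'.map φ)
        (n := a'') hle (by rw [hd'']; exact ha''d)
      exact ⟨N', N'', by exact_mod_cast hN', by exact_mod_cast hN'', hN''ge⟩
end

section
/- Let G be a subgroup of S_n and let B be an n×n skew-symmetric integer matrix with σB = B for all σ ∈ G. Let B̄ be the quotient matrix, with rows and columns indexed by the G-orbits of {1,…,n}, and let D̄ be the diagonal matrix indexed by the G-orbits whose diagonal entry at the orbit ī is |stab_G(i)|, the cardinality of the stabilizer of i in G (which is independent of the representative i). Then D̄·B̄ is skew-symmetric; in particular, the quotient matrix B̄ is skew-symmetrizable. -/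
theorem stab_orbit_sum {n : ℕ} (G : Subgroup (Equiv.Perm (Fin n))) [Fintype G]
    (f : Fin n → ℤ) (k : Fin n) :
    (Nat.card {σ : G // (σ : Equiv.Perm (Fin n)) k = k} : ℤ) *
        ∑ᶠ ℓ ∈ {x | ∃ σ ∈ G, σ k = x}, f ℓ
      = ∑ σ : G, f ((σ : Equiv.Perm (Fin n)) k) := by
  classical
  have hset : {x | ∃ σ ∈ G, σ k = x}
      = ↑(Finset.univ.image (fun σ : G => (σ : Equiv.Perm (Fin n)) k)) := by
    ext x
    simp only [Set.mem_setOf_eq, Finset.coe_image, Finset.coe_univ, Set.image_univ,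
      Set.mem_range]
    constructor
    · rintro ⟨σ, hσ, rfl⟩; exact ⟨⟨σ, hσ⟩, rfl⟩
    · rintro ⟨σ, rfl⟩; exact ⟨σ, σ.2, rfl⟩
  rw [hset, finsum_mem_coe_finset]
  have hcard : ∀ b ∈ Finset.univ.image (fun σ : G => (σ : Equiv.Perm (Fin n)) k),
      (Finset.univ.filter fun σ : G => (σ : Equiv.Perm (Fin n)) k = b).card
        = Nat.card {σ : G // (σ : Equiv.Perm (Fin n)) k = k} := by
    intro b hb
    obtain ⟨τ, -, rfl⟩ := Finset.mem_image.mp hb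
    rw [Nat.card_eq_fintype_card, Fintype.card_subtype]
    apply Finset.card_bij (fun σ _ => τ⁻¹ * σ)
    · intro σ hσ
      simp only [Finset.mem_filter, Finset.mem_univ, true_and] at hσ ⊢
      simp [hσ]
    · intro σ₁ h₁ σ₂ h₂ h
      exact mul_left_cancel h
    · intro σ hσ
      simp only [Finset.mem_filter, Finset.mem_univ, true_and] at hσ
      refine ⟨τ * σ, ?_, by group⟩
      simp [Finset.mem_filter, hσ]
  conv_rhs => rw [Finset.sum_comp (fun ℓ => f ℓ) (fun σ : G => (σ : Equiv.Perm (Fin n)) k)]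
  rw [Finset.mul_sum]
  refine Finset.sum_congr rfl fun b hb => ?_
  rw [hcard b hb, nsmul_eq_mul]

/-- If `B` is skew-symmetric and `G`-invariant, then `D̄·B̄` is skew-symmetric, where
`B̄` is the quotient matrix (entry at the pair of orbits of `i`, `j` being
`Σ_{ℓ ∈ Gi} b_{ℓ,j}`) and `D̄` is the diagonal matrix whose entry at the orbit of `i`
is `|stab_G(i)|`.  Stated entrywise for arbitrary representatives `i`, `j`. -/
theorem stmt_4 {n : ℕ} (G : Subgroup (Equiv.Perm (Fin n))) (B : Matrix (Fin n) (Fin n) ℤ)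
    (hskew : ∀ i j, B j i = -B i j)
    (hinv : ∀ σ ∈ G, ∀ i j, B (σ⁻¹ i) (σ⁻¹ j) = B i j)
    (i j : Fin n) :
    (Nat.card {σ : G // (σ : Equiv.Perm (Fin n)) i = i} : ℤ) *
        ∑ᶠ ℓ ∈ {x | ∃ σ ∈ G, σ i = x}, B ℓ j
      = -((Nat.card {σ : G // (σ : Equiv.Perm (Fin n)) j = j} : ℤ) *
        ∑ᶠ ℓ ∈ {x | ∃ σ ∈ G, σ j = x}, B ℓ i) := by
  classical
  haveI : Fintype G := Fintype.ofFinite G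
  rw [stab_orbit_sum G (fun ℓ => B ℓ j) i, stab_orbit_sum G (fun ℓ => B ℓ i) j]
  have h1 : ∀ σ : G, B ((σ : Equiv.Perm (Fin n)) i) j
      = B i (((Equiv.inv G σ : G) : Equiv.Perm (Fin n)) j) := by
    intro σ
    have := hinv (σ : Equiv.Perm (Fin n)) σ.2 ((σ : Equiv.Perm (Fin n)) i) j
    simpa using this.symm
  calc ∑ σ : G, B ((σ : Equiv.Perm (Fin n)) i) j
      = ∑ σ : G, B i ((σ : Equiv.Perm (Fin n)) j) :=
        Fintype.sum_equiv (Equiv.inv G) _ _ h1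
    _ = -∑ σ : G, B ((σ : Equiv.Perm (Fin n)) j) i := by
        rw [← Finset.sum_neg_distrib]
        exact Finset.sum_congr rfl fun σ _ => by rw [hskew]
end

section
/- Let G be a subgroup of S_n and let B̃ = (b_{ij}) be a 2n×n integer matrix such that σB̃ = B̃ for all σ ∈ G and B̃ is admissible (b_{ij} = 0 whenever i, j ∈ {1,…,n} lie in a common G-orbit). Let Ω be a G-orbit of {1,…,n} and let μ_Ω(B̃) be the orbit mutation of B̃ at Ω. Then σ·μ_Ω(B̃) = μ_Ω(B̃) for all σ ∈ G; that is, G-invariance of the exchange matrix is preserved under orbit mutation. -/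
/-!
Mutations at two indices `x, y` with `b_{xy} = b_{yx} = 0` commute, and mutating at an index of
an orbit keeps the orbit's diagonal block zero; hence for admissible `B̃` the orbit mutation does
not depend on the order of the orbit. Relabelling by `σ` turns `μ_k` into `μ_{σ⁻¹ k}`, so
`σ · μ_Ω(B̃)` is the mutation of `σ · B̃ = B̃` along the enumeration of `Ω` moved by `σ⁻¹`, which is
a reordering of `Ω`.
-/

/-- Matrix mutation in direction `k` of a `2n × n` integer matrix, with rows indexed
by `Fin n ⊕ Fin n` (the `k`-th row being `Sum.inl k`). -/
def mutT {n : ℕ} (B : Matrix (Fin n ⊕ Fin n) (Fin n) ℤ) (k : Fin n) :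
    Matrix (Fin n ⊕ Fin n) (Fin n) ℤ :=
  Matrix.of fun i j =>
    if i = Sum.inl k ∨ j = k then -B i j
    else B i j + Int.sign (B i k) * max (B i k * B (Sum.inl k) j) 0

/-- `G`-invariance of a `2n × n` matrix: `σB̃ = B̃` for all `σ ∈ G`, where `σ` acts on
rows through `σ̃ = Sum.map σ σ` and on columns through `σ`. -/
def GInvT {n : ℕ} (G : Subgroup (Equiv.Perm (Fin n)))
    (B : Matrix (Fin n ⊕ Fin n) (Fin n) ℤ) : Prop :=
  ∀ σ ∈ G, ∀ i j, B (Sum.map (⇑σ) (⇑σ) i) (σ j) = B i j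

theorem List.map_perm_self_of_nodup {α : Type*} {l : List α} (hl : l.Nodup) (e : Equiv.Perm α)
    (he : ∀ a, e a ∈ l ↔ a ∈ l) : (l.map e).Perm l := by
  rw [List.perm_ext_iff_of_nodup (hl.map e.injective) hl]
  intro a
  rw [List.mem_map]
  constructor
  · rintro ⟨b, hb, rfl⟩
    exact (he b).2 hb
  · exact fun ha => ⟨e.symm a, (he _).1 (by rwa [e.apply_symm_apply]), e.apply_symm_apply a⟩

section Mutation

variable {n : ℕ}

def IsAdmissibleOn (S : Set (Fin n)) (B : Matrix (Fin n ⊕ Fin n) (Fin n) ℤ) : Prop :=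
  ∀ a ∈ S, ∀ b ∈ S, B (Sum.inl a) b = 0

theorem IsAdmissibleOn.mutT {S : Set (Fin n)} {B : Matrix (Fin n ⊕ Fin n) (Fin n) ℤ}
    (hB : IsAdmissibleOn S B) {x : Fin n} (hx : x ∈ S) : IsAdmissibleOn S (mutT B x) := by
  intro a ha b hb
  simp only [_root_.mutT, Matrix.of_apply, hB a ha b hb, hB a ha x hx, neg_zero, zero_mul,
    max_self, mul_zero, add_zero, ite_self]

theorem mutT_mutT_comm {B : Matrix (Fin n ⊕ Fin n) (Fin n) ℤ} {x y : Fin n}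
    (hxy : B (Sum.inl x) y = 0) (hyx : B (Sum.inl y) x = 0) :
    mutT (mutT B x) y = mutT (mutT B y) x := by
  rcases eq_or_ne x y with rfl | hne
  · rfl
  have hne' := hne.symm
  funext a b
  simp only [mutT, Matrix.of_apply]
  by_cases hax : a = Sum.inl x <;> by_cases hay : a = Sum.inl y <;>
    by_cases hbx : b = x <;> by_cases hby : b = y <;> simp_all [add_right_comm]

theorem foldl_mutT_eq_of_perm {S : Set (Fin n)} {l₁ l₂ : List (Fin n)} (hp : l₁.Perm l₂)
    (hS : ∀ x ∈ l₁, x ∈ S) {B : Matrix (Fin n ⊕ Fin n) (Fin n) ℤ} (hB : IsAdmissibleOn S B) :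
    l₁.foldl mutT B = l₂.foldl mutT B := by
  induction hp generalizing B with
  | nil => rfl
  | cons x _ ih =>
    exact ih (fun y hy => hS y (List.mem_cons_of_mem x hy)) (hB.mutT (hS x (by simp)))
  | swap x y l =>
    have hx : x ∈ S := hS x (by simp)
    have hy : y ∈ S := hS y (by simp)
    simp only [List.foldl_cons, mutT_mutT_comm (hB y hy x hx) (hB x hx y hy)]
  | trans h₁₂ _ ih₁₂ ih₂₃ =>
    rw [ih₁₂ hS hB, ih₂₃ (fun y hy => hS y (h₁₂.mem_iff.mpr hy)) hB]

theorem submatrix_mutT (σ : Equiv.Perm (Fin n)) (B : Matrix (Fin n ⊕ Fin n) (Fin n) ℤ)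
    (k : Fin n) :
    (mutT B k).submatrix (Sum.map σ σ) σ = mutT (B.submatrix (Sum.map σ σ) σ) (σ.symm k) := by
  funext i j
  have hrow : Sum.map σ σ i = Sum.inl k ↔ i = Sum.inl (σ.symm k) := by
    cases i <;> simp [← Equiv.eq_symm_apply]
  simp [mutT, hrow, ← Equiv.eq_symm_apply]

theorem submatrix_foldl_mutT (σ : Equiv.Perm (Fin n)) (l : List (Fin n))
    (B : Matrix (Fin n ⊕ Fin n) (Fin n) ℤ) :
    (l.foldl mutT B).submatrix (Sum.map σ σ) σ
      = (l.map σ.symm).foldl mutT (B.submatrix (Sum.map σ σ) σ) := by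
  rw [List.foldl_map]
  exact (List.foldl_hom (g₁ := mutT) (g₂ := fun B k => mutT B (σ.symm k)) _
    fun B k => (submatrix_mutT σ B k).symm).symm

theorem gInvT_iff_submatrix {G : Subgroup (Equiv.Perm (Fin n))}
    {B : Matrix (Fin n ⊕ Fin n) (Fin n) ℤ} :
    GInvT G B ↔ ∀ σ ∈ G, B.submatrix (Sum.map σ σ) σ = B := by
  simp only [GInvT, ← Matrix.ext_iff, Matrix.submatrix_apply]

end Mutation

/-- `G`-invariance of an admissible `2n × n` exchange matrix is preserved under
orbit mutation (the orbit mutation `μ_Ω` at the `G`-orbit `Ω` of `k` being the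
composition of the mutations `μ_i` over an enumeration `l` of `Ω`). -/
theorem stmt_6 {n : ℕ} (G : Subgroup (Equiv.Perm (Fin n)))
    (B : Matrix (Fin n ⊕ Fin n) (Fin n) ℤ)
    (hinv : GInvT G B)
    (hadm : ∀ i j : Fin n, (∃ σ ∈ G, σ i = j) → B (Sum.inl i) j = 0)
    (k : Fin n) (l : List (Fin n)) (hnd : l.Nodup)
    (hl : ∀ j, j ∈ l ↔ ∃ σ ∈ G, σ k = j) :
    GInvT G (l.foldl mutT B) := by
  have hB : IsAdmissibleOn {j | j ∈ l} B := by
    intro a ha b hb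
    obtain ⟨τa, hτa, rfl⟩ := (hl a).1 ha
    obtain ⟨τb, hτb, rfl⟩ := (hl b).1 hb
    exact hadm _ _ ⟨τb * τa⁻¹, G.mul_mem hτb (G.inv_mem hτa), by simp⟩
  rw [gInvT_iff_submatrix] at hinv ⊢
  intro σ hσ
  have hperm : (l.map σ.symm).Perm l := by
    refine List.map_perm_self_of_nodup hnd σ.symm fun a => ?_
    simp only [hl]
    constructor
    · rintro ⟨τ, hτ, hτa⟩
      exact ⟨σ * τ, G.mul_mem hσ hτ, by simp [Equiv.Perm.mul_apply, hτa]⟩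
    · rintro ⟨τ, hτ, rfl⟩
      exact ⟨σ⁻¹ * τ, G.mul_mem (G.inv_mem hσ) hτ, rfl⟩
  rw [submatrix_foldl_mutT, hinv σ hσ]
  exact foldl_mutT_eq_of_perm hperm (fun x hx => hperm.mem_iff.mp hx) hB
end

section
/- Let B = (b_{ij}) be an n×n skew-symmetric integer matrix such that the quiver Q(B) is acyclic, and let G be a subgroup of S_n with σB = B for all σ ∈ G. Then B is admissible: b_{ij} = 0 whenever i and j lie in the same G-orbit of {1,…,n} (equivalently, Q(B) has no arrow between two vertices in a common G-orbit). -/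
/-- If `B` is skew-symmetric with acyclic quiver `Q(B)` (arrow `i → j` iff `b_{ji} > 0`)
and `σB = B` for all `σ` in a subgroup `G` of `S_n`, then `B` is admissible:
`b_{ij} = 0` whenever `i` and `j` lie in the same `G`-orbit. -/
theorem stmt_8 {n : ℕ} (B : Matrix (Fin n) (Fin n) ℤ)
    (hskew : ∀ i j, B j i = -B i j)
    (hacyc : ∀ i, ¬ Relation.TransGen (fun a b : Fin n => 0 < B b a) i i)
    (G : Subgroup (Equiv.Perm (Fin n)))
    (hinv : ∀ σ ∈ G, ∀ i j, B (σ⁻¹ i) (σ⁻¹ j) = B i j)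
    (i j : Fin n) (hij : ∃ σ ∈ G, σ i = j) :
    B i j = 0 := by
  obtain ⟨σ, hσ, hs⟩ := hij
  have key : ∀ σ ∈ G, ∀ a : Fin n, ¬ 0 < B a (σ a) := by
    intro σ hσ a hpos
    have hinvk : ∀ (k : ℕ) (x y : Fin n), B ((σ ^ k) x) ((σ ^ k) y) = B x y := by
      intro k x y
      have h1 : (σ ^ k)⁻¹ ∈ G := G.inv_mem (G.pow_mem hσ k)
      simpa using hinv _ h1 x y
    have hchain : ∀ k : ℕ,
        Relation.TransGen (fun a b : Fin n => 0 < B b a) ((σ ^ (k + 1)) a) a := by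
      intro k
      induction k with
      | zero => exact Relation.TransGen.single (by simpa using hpos)
      | succ k ih =>
        refine Relation.TransGen.head ?_ ih
        show 0 < B ((σ ^ (k + 1)) a) ((σ ^ (k + 2)) a)
        have h2 : (σ ^ (k + 2)) a = (σ ^ (k + 1)) (σ a) := by
          rw [pow_succ]; rfl
        rw [h2, hinvk (k + 1) a (σ a)]
        exact hpos
    have hm : 0 < orderOf σ := orderOf_pos σ
    have hfix : (σ ^ orderOf σ) a = a := by rw [pow_orderOf_eq_one]; rfl
    have := hchain (orderOf σ - 1)
    rw [Nat.sub_add_cancel hm, hfix] at this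
    exact hacyc a this
  rcases lt_trichotomy (B i j) 0 with h | h | h
  · exfalso
    apply key σ⁻¹ (G.inv_mem hσ) j
    have : σ⁻¹ j = i := by rw [← hs]; simp
    rw [this, hskew]
    omega
  · exact h
  · exact absurd (hs ▸ h : 0 < B i (σ i)) (key σ hσ i)
end

section
/- Let B = (b_{ij}) be an n×n skew-symmetric integer matrix such that the quiver Q(B) is acyclic, and let G be a subgroup of S_n with σB = B for all σ ∈ G. Then for any two indices i, j ∈ {1,…,n} in the same G-orbit and any ℓ ∈ {1,…,n}: the entries b_{iℓ} and b_{jℓ} are both nonnegative or both nonpositive, and likewise b_{ℓi} and b_{ℓj} are both nonnegative or both nonpositive (equivalently, b_{iℓ}·b_{jℓ} ≥ 0 and b_{ℓi}·b_{ℓj} ≥ 0). -/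
/-!
Let `R a b` mean `0 < B b a`, i.e. the arrow `a → b` of `Q(B)`. An element `σ ∈ G` is an
automorphism of `Q(B)`, so a path from `a` to `σ a` could be pushed forward along `σ, σ², …` and
closed up after `orderOf σ` steps into a cycle. Hence no path joins two points of one orbit.
If `b_{iℓ}` and `b_{jℓ}` had strictly opposite signs, skew-symmetry would give a path of length
two `i → ℓ → j` or `j → ℓ → i`.
-/

open Relation

theorem Relation.TransGen.self_of_isPeriodicPt {α : Type*} {R : α → α → Prop} {f : α → α}
    (hf : ∀ a b, R a b → R (f a) (f b)) {m : ℕ} (hm : 0 < m) {a : α}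
    (ha : Function.IsPeriodicPt f m a) (h : TransGen R a (f a)) : TransGen R a a := by
  have hiter : ∀ k a b, R a b → R (f^[k] a) (f^[k] b) := by
    intro k
    induction k with
    | zero => exact fun _ _ => id
    | succ k ih => exact fun a b hab => ih _ _ (hf a b hab)
  have hpath : ∀ k, TransGen R a (f^[k + 1] a) := by
    intro k
    induction k with
    | zero => simpa using h
    | succ k ih =>
      have hshift : TransGen R (f^[k + 1] a) (f^[k + 1] (f a)) := h.lift _ (hiter (k + 1))
      rw [← Function.iterate_succ_apply] at hshift
      exact ih.trans hshift
  obtain ⟨k, rfl⟩ := Nat.exists_eq_add_one.mpr hm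
  have hcycle := hpath k
  rwa [ha.eq] at hcycle

theorem Relation.not_transGen_apply_of_irrefl {α : Type*} [Finite α] {R : α → α → Prop}
    (hacyc : ∀ a, ¬ TransGen R a a) {σ : Equiv.Perm α} (hσ : ∀ a b, R a b → R (σ a) (σ b))
    (a : α) : ¬ TransGen R a (σ a) := fun h =>
  hacyc a <| h.self_of_isPeriodicPt hσ (orderOf_pos σ) <| by
    rw [Function.IsPeriodicPt, Equiv.Perm.iterate_eq_pow, pow_orderOf_eq_one]
    rfl

theorem Matrix.transGen_of_mul_neg {ι : Type*} {B : Matrix ι ι ℤ}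
    (hskew : ∀ i j, B j i = -B i j) {i j ℓ : ι} (h : B i ℓ * B j ℓ < 0) :
    TransGen (fun a b => 0 < B b a) i j ∨ TransGen (fun a b => 0 < B b a) j i := by
  rcases lt_or_gt_of_ne (left_ne_zero_of_mul h.ne) with hi | hi
  · have hj : 0 < B j ℓ := pos_of_mul_neg_right h hi.le
    exact .inl <| .tail (.single (show 0 < B ℓ i by rw [hskew]; omega)) hj
  · have hj : B j ℓ < 0 := neg_of_mul_neg_right h hi.le
    exact .inr <| .tail (.single (show 0 < B ℓ j by rw [hskew]; omega)) hi

/-- If `B` is skew-symmetric with acyclic quiver `Q(B)` (arrow `i → j` iff `b_{ji} > 0`)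
and `σB = B` for all `σ` in a subgroup `G` of `S_n`, then for any `i`, `j` in the same
`G`-orbit and any `ℓ`, the entries `b_{iℓ}`, `b_{jℓ}` are both nonnegative or both
nonpositive, and likewise `b_{ℓi}`, `b_{ℓj}` (equivalently, the products are `≥ 0`). -/
theorem stmt_9 {n : ℕ} (B : Matrix (Fin n) (Fin n) ℤ)
    (hskew : ∀ i j, B j i = -B i j)
    (hacyc : ∀ i, ¬ Relation.TransGen (fun a b : Fin n => 0 < B b a) i i)
    (G : Subgroup (Equiv.Perm (Fin n)))
    (hinv : ∀ σ ∈ G, ∀ i j, B (σ⁻¹ i) (σ⁻¹ j) = B i j)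
    (i j : Fin n) (hij : ∃ σ ∈ G, σ i = j) (ℓ : Fin n) :
    0 ≤ B i ℓ * B j ℓ ∧ 0 ≤ B ℓ i * B ℓ j := by
  obtain ⟨σ, hσ, rfl⟩ := hij
  have hhom : ∀ τ ∈ G, ∀ a b, 0 < B b a → 0 < B (τ b) (τ a) := fun τ hτ a b hab => by
    have hBτ := hinv τ hτ (τ b) (τ a)
    simp only [Equiv.Perm.inv_def, Equiv.symm_apply_apply] at hBτ
    rwa [← hBτ]
  have hcol : 0 ≤ B i ℓ * B (σ i) ℓ := by
    refine not_lt.mp fun hneg => (Matrix.transGen_of_mul_neg hskew hneg).elim ?_ ?_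
    · exact not_transGen_apply_of_irrefl hacyc (hhom σ hσ) i
    · simpa using not_transGen_apply_of_irrefl hacyc (hhom σ⁻¹ (inv_mem hσ)) (σ i)
  refine ⟨hcol, ?_⟩
  rwa [hskew i, hskew (σ i), neg_mul_neg]
end

section
/- Let G be a subgroup of S_n and let B̃ be a 2n×n integer matrix such that σB̃ = B̃ for all σ ∈ G and B̃ is strongly admissible. Let Ω = k̄ be a G-orbit of {1,…,n}. Then the quotient matrix of μ_Ω(B̃) equals μ_{k̄} applied to the quotient matrix of B̃; that is, taking quotient matrices commutes with orbit mutation: (μ_Ω(B̃))‾ = μ_{k̄}(B̃‾). -/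
/-- The `G`-orbit of a row index of a `2n × n` matrix (under `σ̃ = Sum.map σ σ`). -/
def rowOrbit {n : ℕ} (G : Subgroup (Equiv.Perm (Fin n))) (i : Fin n ⊕ Fin n) :
    Set (Fin n ⊕ Fin n) :=
  {x | ∃ σ ∈ G, Sum.map (⇑σ) (⇑σ) i = x}

/-- The `G`-orbit of a column index. -/
def colOrbit {n : ℕ} (G : Subgroup (Equiv.Perm (Fin n))) (j : Fin n) : Set (Fin n) :=
  {x | ∃ σ ∈ G, σ j = x}

/-- Admissibility: `b_{ij} = 0` whenever the column indices `i`, `j` lie in the same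
`G`-orbit. -/
def Admissible {n : ℕ} (G : Subgroup (Equiv.Perm (Fin n)))
    (B : Matrix (Fin n ⊕ Fin n) (Fin n) ℤ) : Prop :=
  ∀ i j : Fin n, j ∈ colOrbit G i → B (Sum.inl i) j = 0

/-- Strong admissibility: admissibility together with the sign conditions (1) and (2). -/
def StronglyAdmissible {n : ℕ} (G : Subgroup (Equiv.Perm (Fin n)))
    (B : Matrix (Fin n ⊕ Fin n) (Fin n) ℤ) : Prop :=
  Admissible G B ∧
    (∀ i i' : Fin n ⊕ Fin n, i' ∈ rowOrbit G i → ∀ ℓ : Fin n, 0 ≤ B i ℓ * B i' ℓ) ∧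
    (∀ j j' : Fin n, j' ∈ colOrbit G j → ∀ ℓ : Fin n ⊕ Fin n, 0 ≤ B ℓ j * B ℓ j')

/-- The entry of the quotient matrix at the pair of orbits of `i` and `j`. -/
noncomputable def qEnt {n : ℕ} (G : Subgroup (Equiv.Perm (Fin n)))
    (B : Matrix (Fin n ⊕ Fin n) (Fin n) ℤ) (i : Fin n ⊕ Fin n) (j : Fin n) : ℤ :=
  ∑ᶠ ℓ ∈ rowOrbit G i, B ℓ j

/-!
Directions in one orbit `Ω` are pairwise orthogonal (`b_{ab} = 0` for `a, b ∈ Ω`), so the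
mutations `μ_a`, `a ∈ Ω`, do not see each other: `μ_Ω` negates the rows in `Ω` and the columns
in `Ω` and adds to every other entry the sum over `a ∈ Ω` of the usual correction terms.
Writing `sgn(x) max(xy, 0) = (|x| y + x |y|) / 2` makes each correction term bilinear in the
pair (`x`, `|x|`), (`y`, `|y|`). Summing over an orbit of rows, `G`-invariance makes the sums of
`b_{ℓa}` and `|b_{ℓa}|` independent of `a ∈ Ω`, and strong admissibility makes the entries of a
column over a row orbit sign-coherent, so the sum of absolute values is the absolute value of
the quotient entry. The summed correction is therefore the correction term of the quotient.
-/

open Finset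

theorem Int.two_mul_sign_mul_max (a b : ℤ) :
    2 * (Int.sign a * max (a * b) 0) = |a| * b + a * |b| := by
  rcases lt_trichotomy a 0 with ha | rfl | ha
  · rw [Int.sign_eq_neg_one_of_neg ha, abs_of_neg ha]
    rcases le_total b 0 with hb | hb
    · rw [max_eq_left (mul_nonneg_of_nonpos_of_nonpos ha.le hb), abs_of_nonpos hb]; ring
    · rw [max_eq_right (mul_nonpos_of_nonpos_of_nonneg ha.le hb), abs_of_nonneg hb]; ring
  · simp
  · rw [Int.sign_eq_one_of_pos ha, abs_of_pos ha]
    rcases le_total b 0 with hb | hb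
    · rw [max_eq_right (mul_nonpos_of_nonneg_of_nonpos ha.le hb), abs_of_nonpos hb]; ring
    · rw [max_eq_left (mul_nonneg ha.le hb), abs_of_nonneg hb]; ring

theorem Finset.abs_sum_of_mul_nonneg {ι α : Type*} [Ring α] [LinearOrder α]
    [IsStrictOrderedRing α] (s : Finset ι) (f : ι → α)
    (h : ∀ x ∈ s, ∀ y ∈ s, 0 ≤ f x * f y) : |∑ x ∈ s, f x| = ∑ x ∈ s, |f x| := by
  by_cases hpos : ∀ x ∈ s, 0 ≤ f x
  · rw [abs_of_nonneg (sum_nonneg hpos)]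
    exact sum_congr rfl fun x hx => (abs_of_nonneg (hpos x hx)).symm
  · push Not at hpos
    obtain ⟨y, hy, hfy⟩ := hpos
    have hneg : ∀ x ∈ s, f x ≤ 0 := fun x hx => nonpos_of_mul_nonneg_left (h x hx y hy) hfy
    rw [abs_of_nonpos (sum_nonpos hneg), ← sum_neg_distrib]
    exact sum_congr rfl fun x hx => (abs_of_nonpos (hneg x hx)).symm

theorem sum_sum_sign_mul_max {ι κ : Type*} (R : Finset ι) (K : Finset κ)
    (a : ι → κ → ℤ) (d : κ → ℤ) (A D : ℤ)
    (ha : ∀ k ∈ K, ∑ ℓ ∈ R, a ℓ k = A) (ha_abs : ∀ k ∈ K, ∑ ℓ ∈ R, |a ℓ k| = |A|)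
    (hd : ∑ k ∈ K, d k = D) (hd_abs : ∑ k ∈ K, |d k| = |D|) :
    ∑ ℓ ∈ R, ∑ k ∈ K, Int.sign (a ℓ k) * max (a ℓ k * d k) 0 = Int.sign A * max (A * D) 0 := by
  refine mul_left_cancel₀ (two_ne_zero (α := ℤ)) ?_
  calc 2 * ∑ ℓ ∈ R, ∑ k ∈ K, Int.sign (a ℓ k) * max (a ℓ k * d k) 0
      = ∑ k ∈ K, ((∑ ℓ ∈ R, |a ℓ k|) * d k + (∑ ℓ ∈ R, a ℓ k) * |d k|) := by
        rw [sum_comm, mul_sum]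
        refine sum_congr rfl fun k _ => ?_
        simp only [mul_sum, Int.two_mul_sign_mul_max, sum_add_distrib, sum_mul]
    _ = |A| * D + A * |D| := by
        rw [← hd_abs, ← hd, mul_sum, mul_sum, ← sum_add_distrib]
        exact sum_congr rfl fun k hk => by rw [ha k hk, ha_abs k hk]
    _ = 2 * (Int.sign A * max (A * D) 0) := (Int.two_mul_sign_mul_max A D).symm

section SimultaneousMutation

variable {n : ℕ}

/-- Mutation in all directions of `s` at once, by the closed formula valid when the rows in `s`
vanish on the columns in `s`. -/
def mutFinset (B : Matrix (Fin n ⊕ Fin n) (Fin n) ℤ) (s : Finset (Fin n)) :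
    Matrix (Fin n ⊕ Fin n) (Fin n) ℤ :=
  Matrix.of fun i j =>
    if (∃ a ∈ s, i = Sum.inl a) ∨ j ∈ s then -B i j
    else B i j + ∑ a ∈ s, Int.sign (B i a) * max (B i a * B (Sum.inl a) j) 0

variable {B : Matrix (Fin n ⊕ Fin n) (Fin n) ℤ} {s : Finset (Fin n)} {i : Fin n ⊕ Fin n}
  {j k : Fin n}

theorem mutFinset_apply_of_mem (h : (∃ a ∈ s, i = Sum.inl a) ∨ j ∈ s) :
    mutFinset B s i j = -B i j := by
  rw [mutFinset, Matrix.of_apply, if_pos h]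

theorem mutFinset_apply_of_notMem (h : ¬((∃ a ∈ s, i = Sum.inl a) ∨ j ∈ s)) :
    mutFinset B s i j =
      B i j + ∑ a ∈ s, Int.sign (B i a) * max (B i a * B (Sum.inl a) j) 0 := by
  rw [mutFinset, Matrix.of_apply, if_neg h]

@[simp]
theorem mutFinset_empty (B : Matrix (Fin n ⊕ Fin n) (Fin n) ℤ) : mutFinset B ∅ = B := by
  ext i j
  simp [mutFinset]

theorem mutFinset_apply_col (hk : k ∉ s) (hB : ∀ a ∈ s, B (Sum.inl a) k = 0) :
    mutFinset B s i k = B i k := by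
  by_cases h : (∃ a ∈ s, i = Sum.inl a) ∨ k ∈ s
  · rw [mutFinset_apply_of_mem h]
    obtain ⟨a, ha, rfl⟩ := h.resolve_right hk
    rw [hB a ha, neg_zero]
  · rw [mutFinset_apply_of_notMem h, add_eq_left]
    exact sum_eq_zero fun a ha => by simp [hB a ha]

theorem mutFinset_apply_row (hk : k ∉ s) (hB : ∀ b ∈ s, B (Sum.inl k) b = 0) :
    mutFinset B s (Sum.inl k) j = B (Sum.inl k) j := by
  have hrow : ¬∃ a ∈ s, (Sum.inl k : Fin n ⊕ Fin n) = Sum.inl a := by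
    rintro ⟨a, ha, hka⟩
    exact hk (Sum.inl_injective hka ▸ ha)
  by_cases hj : j ∈ s
  · rw [mutFinset_apply_of_mem (Or.inr hj), hB j hj, neg_zero]
  · rw [mutFinset_apply_of_notMem (not_or.2 ⟨hrow, hj⟩), add_eq_left]
    exact sum_eq_zero fun a ha => by simp [hB a ha]

theorem mutT_mutFinset (hk : k ∉ s)
    (hB : ∀ a ∈ insert k s, ∀ b ∈ insert k s, B (Sum.inl a) b = 0) :
    mutT (mutFinset B s) k = mutFinset B (insert k s) := by
  have hcol : ∀ i, mutFinset B s i k = B i k := fun i =>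
    mutFinset_apply_col hk fun a ha => hB a (mem_insert_of_mem ha) k (mem_insert_self k s)
  have hrow : ∀ j, mutFinset B s (Sum.inl k) j = B (Sum.inl k) j := fun j =>
    mutFinset_apply_row hk fun b hb => hB k (mem_insert_self k s) b (mem_insert_of_mem hb)
  ext i j
  simp only [mutT, Matrix.of_apply, hcol, hrow]
  by_cases hk' : i = Sum.inl k ∨ j = k
  · rw [if_pos hk', mutFinset_apply_of_mem (s := insert k s)]
    · rcases hk' with rfl | rfl
      · rw [hrow]
      · rw [hcol]
    · rcases hk' with rfl | rfl
      · exact Or.inl ⟨k, mem_insert_self k s, rfl⟩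
      · exact Or.inr (mem_insert_self _ s)
  rw [if_neg hk']
  by_cases hs : (∃ a ∈ s, i = Sum.inl a) ∨ j ∈ s
  · have hs' : (∃ a ∈ insert k s, i = Sum.inl a) ∨ j ∈ insert k s := by
      rcases hs with ⟨a, ha, hi⟩ | hj
      · exact Or.inl ⟨a, mem_insert_of_mem ha, hi⟩
      · exact Or.inr (mem_insert_of_mem hj)
    rw [mutFinset_apply_of_mem hs, mutFinset_apply_of_mem hs', add_eq_left]
    rcases hs with ⟨a, ha, rfl⟩ | hj
    · simp [hB a (mem_insert_of_mem ha) k (mem_insert_self k s)]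
    · simp [hB k (mem_insert_self k s) j (mem_insert_of_mem hj)]
  · have hs' : ¬((∃ a ∈ insert k s, i = Sum.inl a) ∨ j ∈ insert k s) := by
      simp only [mem_insert, exists_eq_or_imp, not_or] at hs hk' ⊢
      exact ⟨⟨hk'.1, hs.1⟩, hk'.2, hs.2⟩
    rw [mutFinset_apply_of_notMem hs, mutFinset_apply_of_notMem hs', sum_insert hk]
    ring

theorem foldl_mutT_eq_mutFinset (l : List (Fin n)) (hnd : l.Nodup)
    (hB : ∀ a ∈ l, ∀ b ∈ l, B (Sum.inl a) b = 0) :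
    l.foldl mutT B = mutFinset B l.toFinset := by
  induction l using List.reverseRecOn with
  | nil => simp
  | append_singleton l k ih =>
    obtain ⟨hnd, hk⟩ : l.Nodup ∧ k ∉ l := by
      simp only [List.nodup_append, List.nodup_cons, List.not_mem_nil, List.mem_singleton] at hnd
      exact ⟨hnd.1, fun h => hnd.2.2 k h k rfl rfl⟩
    have hins : (l ++ [k]).toFinset = insert k l.toFinset := by
      rw [List.toFinset_append, List.toFinset_cons, List.toFinset_nil, union_comm]
      rfl
    rw [List.foldl_append, List.foldl_cons, List.foldl_nil,
      ih hnd fun a ha b hb => hB a (by simp [ha]) b (by simp [hb]), hins]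
    exact mutT_mutFinset (by simpa using hk) fun a ha b hb =>
      hB a (by simpa [or_comm] using ha) b (by simpa [or_comm] using hb)

end SimultaneousMutation

section Orbits

variable {n : ℕ} {G : Subgroup (Equiv.Perm (Fin n))}

theorem sumMap_sumMap_perm (σ τ : Equiv.Perm (Fin n)) (i : Fin n ⊕ Fin n) :
    Sum.map σ σ (Sum.map τ τ i) = Sum.map (⇑(σ * τ)) (⇑(σ * τ)) i := by
  cases i <;> rfl

theorem mem_rowOrbit_self (i : Fin n ⊕ Fin n) : i ∈ rowOrbit G i :=
  ⟨1, G.one_mem, by cases i <;> rfl⟩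

theorem mem_colOrbit_self (j : Fin n) : j ∈ colOrbit G j := ⟨1, G.one_mem, rfl⟩

theorem rowOrbit_eq_of_mem {i i' : Fin n ⊕ Fin n} (h : i' ∈ rowOrbit G i) :
    rowOrbit G i' = rowOrbit G i := by
  obtain ⟨σ, hσ, rfl⟩ := h
  ext x
  constructor
  · rintro ⟨τ, hτ, rfl⟩
    exact ⟨τ * σ, G.mul_mem hτ hσ, (sumMap_sumMap_perm τ σ i).symm⟩
  · rintro ⟨τ, hτ, rfl⟩
    exact ⟨τ * σ⁻¹, G.mul_mem hτ (G.inv_mem hσ), by rw [sumMap_sumMap_perm, inv_mul_cancel_right]⟩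

theorem colOrbit_eq_of_mem {j j' : Fin n} (h : j' ∈ colOrbit G j) :
    colOrbit G j' = colOrbit G j := by
  obtain ⟨σ, hσ, rfl⟩ := h
  ext x
  constructor
  · rintro ⟨τ, hτ, rfl⟩
    exact ⟨τ * σ, G.mul_mem hτ hσ, rfl⟩
  · rintro ⟨τ, hτ, rfl⟩
    exact ⟨τ * σ⁻¹, G.mul_mem hτ (G.inv_mem hσ), by simp⟩

theorem mem_rowOrbit_inl {k : Fin n} {i : Fin n ⊕ Fin n} :
    i ∈ rowOrbit G (Sum.inl k) ↔ ∃ a ∈ colOrbit G k, i = Sum.inl a := by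
  constructor
  · rintro ⟨σ, hσ, rfl⟩
    exact ⟨σ k, ⟨σ, hσ, rfl⟩, rfl⟩
  · rintro ⟨a, ⟨σ, hσ, rfl⟩, rfl⟩
    exact ⟨σ, hσ, rfl⟩

theorem Admissible.apply_inl_eq_zero {B : Matrix (Fin n ⊕ Fin n) (Fin n) ℤ}
    (hB : Admissible G B) {k a b : Fin n} (ha : a ∈ colOrbit G k) (hb : b ∈ colOrbit G k) :
    B (Sum.inl a) b = 0 :=
  hB a b (colOrbit_eq_of_mem ha ▸ hb)

end Orbits

section QuotientEntries

variable {n : ℕ} {G : Subgroup (Equiv.Perm (Fin n))} {B : Matrix (Fin n ⊕ Fin n) (Fin n) ℤ}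

theorem qEnt_eq_sum (G : Subgroup (Equiv.Perm (Fin n))) (B : Matrix (Fin n ⊕ Fin n) (Fin n) ℤ)
    (i : Fin n ⊕ Fin n) (j : Fin n) :
    qEnt G B i j = ∑ ℓ ∈ (rowOrbit G i).toFinite.toFinset, B ℓ j := by
  rw [qEnt, ← finsum_mem_coe_finset, Set.Finite.coe_toFinset]

theorem GInvT.map (hB : GInvT G B) (f : ℤ → ℤ) : GInvT G (B.map f) :=
  fun σ hσ i j => by simp only [Matrix.map_apply, hB σ hσ i j]

theorem GInvT.qEnt_eq_of_mem_colOrbit (hB : GInvT G B) (i : Fin n ⊕ Fin n) {k k' : Fin n}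
    (hk' : k' ∈ colOrbit G k) : qEnt G B i k' = qEnt G B i k := by
  obtain ⟨σ, hσ, rfl⟩ := hk'
  rw [qEnt_eq_sum, qEnt_eq_sum]
  refine (sum_equiv (Equiv.sumCongr σ σ) (fun ℓ => ?_) fun ℓ _ => (hB σ hσ ℓ k).symm).symm
  have hσℓ : Sum.map σ σ ℓ ∈ rowOrbit G ℓ := ⟨σ, hσ, rfl⟩
  simp only [Set.Finite.mem_toFinset, Equiv.sumCongr_apply]
  constructor
  · intro hℓ
    exact rowOrbit_eq_of_mem hℓ ▸ hσℓ
  · intro hℓ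
    rw [← rowOrbit_eq_of_mem hℓ, rowOrbit_eq_of_mem hσℓ]
    exact mem_rowOrbit_self ℓ

theorem qEnt_map_abs
    (hB : ∀ i i' : Fin n ⊕ Fin n, i' ∈ rowOrbit G i → ∀ ℓ : Fin n, 0 ≤ B i ℓ * B i' ℓ)
    (i : Fin n ⊕ Fin n) (j : Fin n) : qEnt G (B.map abs) i j = |qEnt G B i j| := by
  rw [qEnt_eq_sum, qEnt_eq_sum, abs_sum_of_mul_nonneg]
  · rfl
  intro ℓ hℓ ℓ' hℓ'
  rw [Set.Finite.mem_toFinset] at hℓ hℓ'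
  exact hB ℓ ℓ' (rowOrbit_eq_of_mem hℓ ▸ hℓ') j

theorem qEnt_inl_eq_sum (G : Subgroup (Equiv.Perm (Fin n)))
    (B : Matrix (Fin n ⊕ Fin n) (Fin n) ℤ) {k : Fin n} {s : Finset (Fin n)}
    (hs : ∀ a, a ∈ s ↔ a ∈ colOrbit G k) (j : Fin n) :
    qEnt G B (Sum.inl k) j = ∑ a ∈ s, B (Sum.inl a) j := by
  have himg : s.map Function.Embedding.inl = (rowOrbit G (Sum.inl k)).toFinite.toFinset := by
    ext x
    simp [mem_rowOrbit_inl, hs, eq_comm]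
  rw [qEnt_eq_sum, ← himg, sum_map]
  rfl

end QuotientEntries

section QuotientMutation

variable {n : ℕ} {G : Subgroup (Equiv.Perm (Fin n))} {B : Matrix (Fin n ⊕ Fin n) (Fin n) ℤ}
  {k : Fin n} {s : Finset (Fin n)} {i : Fin n ⊕ Fin n} {j : Fin n}

theorem qEnt_mutFinset_of_mem (hs : ∀ a, a ∈ s ↔ a ∈ colOrbit G k)
    (h : i ∈ rowOrbit G (Sum.inl k) ∨ j ∈ colOrbit G k) :
    qEnt G (mutFinset B s) i j = -qEnt G B i j := by
  rw [qEnt_eq_sum, qEnt_eq_sum, ← sum_neg_distrib]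
  refine sum_congr rfl fun ℓ hℓ => mutFinset_apply_of_mem ?_
  rw [Set.Finite.mem_toFinset] at hℓ
  rcases h with hi | hj
  · obtain ⟨a, ha, rfl⟩ := mem_rowOrbit_inl.1 (rowOrbit_eq_of_mem hi ▸ hℓ)
    exact Or.inl ⟨a, (hs a).2 ha, rfl⟩
  · exact Or.inr ((hs j).2 hj)

theorem qEnt_mutFinset_of_notMem (hinv : GInvT G B)
    (hrow : ∀ i i' : Fin n ⊕ Fin n, i' ∈ rowOrbit G i → ∀ ℓ : Fin n, 0 ≤ B i ℓ * B i' ℓ)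
    (hs : ∀ a, a ∈ s ↔ a ∈ colOrbit G k) (h : ¬(i ∈ rowOrbit G (Sum.inl k) ∨ j ∈ colOrbit G k)) :
    qEnt G (mutFinset B s) i j =
      qEnt G B i j + Int.sign (qEnt G B i k) * max (qEnt G B i k * qEnt G B (Sum.inl k) j) 0 := by
  have hR : ∀ ℓ ∈ (rowOrbit G i).toFinite.toFinset, mutFinset B s ℓ j =
      B ℓ j + ∑ a ∈ s, Int.sign (B ℓ a) * max (B ℓ a * B (Sum.inl a) j) 0 := by
    intro ℓ hℓ
    rw [Set.Finite.mem_toFinset] at hℓ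
    refine mutFinset_apply_of_notMem ?_
    rintro (⟨a, ha, rfl⟩ | hj)
    · have hi : i ∈ rowOrbit G (Sum.inl a) := rowOrbit_eq_of_mem hℓ ▸ mem_rowOrbit_self i
      rw [rowOrbit_eq_of_mem (mem_rowOrbit_inl.2 ⟨a, (hs a).1 ha, rfl⟩)] at hi
      exact h (Or.inl hi)
    · exact h (Or.inr ((hs j).1 hj))
  rw [qEnt_eq_sum, sum_congr rfl hR, sum_add_distrib, ← qEnt_eq_sum]
  congr 1
  refine sum_sum_sign_mul_max _ s (fun ℓ a => B ℓ a) (fun a => B (Sum.inl a) j) _ _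
    (fun a ha => ?_) (fun a ha => ?_) (qEnt_inl_eq_sum G B hs j).symm ?_
  · rw [← qEnt_eq_sum, hinv.qEnt_eq_of_mem_colOrbit i ((hs a).1 ha)]
  · rw [← qEnt_map_abs hrow, ← (hinv.map abs).qEnt_eq_of_mem_colOrbit i ((hs a).1 ha),
      qEnt_eq_sum]
    rfl
  · rw [← qEnt_map_abs hrow, qEnt_inl_eq_sum G _ hs]
    rfl

end QuotientMutation

/-- For a `G`-invariant, strongly admissible exchange matrix, taking quotient matrices
commutes with orbit mutation: the quotient matrix of `μ_Ω(B̃)` equals the mutation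
`μ_{k̄}` of the quotient matrix of `B̃` (stated entrywise on representatives, where
`Ω` is the `G`-orbit of `k`, enumerated by the list `l`). -/
theorem stmt_11 {n : ℕ} (G : Subgroup (Equiv.Perm (Fin n)))
    (B : Matrix (Fin n ⊕ Fin n) (Fin n) ℤ)
    (hinv : GInvT G B) (hsa : StronglyAdmissible G B)
    (k : Fin n) (l : List (Fin n)) (hnd : l.Nodup)
    (hl : ∀ j, j ∈ l ↔ j ∈ colOrbit G k) :
    ∀ (i : Fin n ⊕ Fin n) (j : Fin n),
      ((i ∈ rowOrbit G (Sum.inl k) ∨ j ∈ colOrbit G k) →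
        qEnt G (l.foldl mutT B) i j = -qEnt G B i j) ∧
      (¬(i ∈ rowOrbit G (Sum.inl k) ∨ j ∈ colOrbit G k) →
        qEnt G (l.foldl mutT B) i j =
          qEnt G B i j +
            Int.sign (qEnt G B i k) * max (qEnt G B i k * qEnt G B (Sum.inl k) j) 0) := by
  obtain ⟨hadm, hrow, -⟩ := hsa
  have hs : ∀ a, a ∈ l.toFinset ↔ a ∈ colOrbit G k := by simpa using hl
  rw [foldl_mutT_eq_mutFinset l hnd fun a ha b hb =>
    hadm.apply_inl_eq_zero ((hl a).1 ha) ((hl b).1 hb)]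
  exact fun i j => ⟨qEnt_mutFinset_of_mem hs, qEnt_mutFinset_of_notMem hinv hrow hs⟩
end

section
/- Let Q⁰ be an acyclic quiver whose underlying undirected graph is the Dynkin diagram of type D_n (n ≥ 4), and let r ∈ {1,…,n−2}. Define d'' = e_r+⋯+e_{n−1} and d''' = e_r+⋯+e_{n−2}+e_n if the arrow of Q⁰ between n−2 and n−1 and the arrow between n−2 and n point in the same direction (both out of n−2 or both into n−2), and d'' = e_r+⋯+e_{n−2}, d''' = e_r+⋯+e_n otherwise. Suppose v, w ∈ ℤ^n satisfy 0 ≤ v ≤ d'', 0 ≤ w ≤ d''', every arrow of Q⁰ is acceptable with respect to (d'', v) and with respect to (d''', w), and set a = v + w. Then: (1) 0 ≤ a_i ≤ 2 for i ∈ [r, n−2], 0 ≤ a_{n−1} ≤ 1, 0 ≤ a_n ≤ 1, and a_i = 0 for i ∈ [1, r−1]; (2) if i→j in Q⁰ with r ≤ i, j ≤ n−2, then a_j ≥ a_i; (3) if n−2→n in Q⁰ (resp. n−2→n−1) and a_{n−2} = 2, then a_n = 1 (resp. a_{n−1} = 1); (4) if n→n−2 in Q⁰ (resp. n−1→n−2),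 then a_{n−2} ≥ a_n (resp. a_{n−2} ≥ a_{n−1}); (5) at least one of the arrow between n−2 and n−1 and the arrow between n−2 and n is not critical with respect to (d''+d''', a). -/
/-- Every arrow of the quiver `arr` is acceptable with respect to `(d, e)`:
`e_i − e_j ≤ [d_i − d_j]₊` for every arrow `i → j`. -/
def AcceptableAll (arr : ℕ → ℕ → Prop) (d e : ℕ → ℤ) : Prop :=
  ∀ i j, arr i j → e i - e j ≤ max (d i - d j) 0

/-- The arrow `i → j` is critical with respect to `(d, e)`. -/
def Critical (d e : ℕ → ℤ) (i j : ℕ) : Prop :=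
  (d i = 2 ∧ e i = 1 ∧ d j = 1 ∧ e j = 0) ∨ (d j = 2 ∧ e j = 1 ∧ d i = 1 ∧ e i = 1)

/-- The arrow between `x` and `y` (in whichever direction it exists) is critical
with respect to `(d, e)`. -/
def CritBetween (arr : ℕ → ℕ → Prop) (d e : ℕ → ℤ) (x y : ℕ) : Prop :=
  (arr x y ∧ Critical d e x y) ∨ (arr y x ∧ Critical d e y x)

private lemma acc_le {x y dx dy : ℤ} (hxy : dx ≤ dy) (h : x - y ≤ max (dx - dy) 0) :
    x ≤ y := by
  rw [max_eq_right (by omega : dx - dy ≤ 0)] at h; omega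

/-- Properties of `a = v + w` for `(v, w)` with `0 ≤ v ≤ d''`, `0 ≤ w ≤ d'''` and all
arrows of an acyclic orientation `Q⁰` of the type `D_n` Dynkin diagram acceptable
with respect to `(d'', v)` and `(d''', w)`. -/
theorem stmt_13 (n r : ℕ) (hn : 4 ≤ n) (hr : 1 ≤ r) (hrn : r ≤ n - 2)
    (arr : ℕ → ℕ → Prop)
    (harr : ∀ i j, arr i j →
      (1 ≤ i ∧ i ≤ n - 2 ∧ j = i + 1) ∨ (1 ≤ j ∧ j ≤ n - 2 ∧ i = j + 1) ∨
      (i = n - 2 ∧ j = n) ∨ (i = n ∧ j = n - 2))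
    (horient1 : ∀ i, 1 ≤ i → i ≤ n - 2 → (arr i (i + 1) ↔ ¬ arr (i + 1) i))
    (horient2 : arr (n - 2) n ↔ ¬ arr n (n - 2))
    (hacyc : ∀ i, ¬ Relation.TransGen arr i i)
    (d'' d''' : ℕ → ℤ)
    (hsame : ((arr (n - 2) (n - 1) ∧ arr (n - 2) n) ∨
        (arr (n - 1) (n - 2) ∧ arr n (n - 2))) →
      (∀ i, d'' i = if r ≤ i ∧ i ≤ n - 1 then 1 else 0) ∧
      (∀ i, d''' i = if (r ≤ i ∧ i ≤ n - 2) ∨ i = n then 1 else 0))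
    (hdiff : ¬((arr (n - 2) (n - 1) ∧ arr (n - 2) n) ∨
        (arr (n - 1) (n - 2) ∧ arr n (n - 2))) →
      (∀ i, d'' i = if r ≤ i ∧ i ≤ n - 2 then 1 else 0) ∧
      (∀ i, d''' i = if r ≤ i ∧ i ≤ n then 1 else 0))
    (v w : ℕ → ℤ)
    (hv : ∀ i, 0 ≤ v i ∧ v i ≤ d'' i) (hw : ∀ i, 0 ≤ w i ∧ w i ≤ d''' i)
    (hav : AcceptableAll arr d'' v) (haw : AcceptableAll arr d''' w)
    (a : ℕ → ℤ) (ha : ∀ i, a i = v i + w i) :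
    ((∀ i, r ≤ i → i ≤ n - 2 → 0 ≤ a i ∧ a i ≤ 2) ∧
      (0 ≤ a (n - 1) ∧ a (n - 1) ≤ 1) ∧ (0 ≤ a n ∧ a n ≤ 1) ∧
      (∀ i, 1 ≤ i → i ≤ r - 1 → a i = 0)) ∧
    (∀ i j, arr i j → r ≤ i → i ≤ n - 2 → r ≤ j → j ≤ n - 2 → a i ≤ a j) ∧
    ((arr (n - 2) n → a (n - 2) = 2 → a n = 1) ∧
      (arr (n - 2) (n - 1) → a (n - 2) = 2 → a (n - 1) = 1)) ∧
    ((arr n (n - 2) → a n ≤ a (n - 2)) ∧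
      (arr (n - 1) (n - 2) → a (n - 1) ≤ a (n - 2))) ∧
    ¬(CritBetween arr (fun i => d'' i + d''' i) a (n - 2) (n - 1) ∧
      CritBetween arr (fun i => d'' i + d''' i) a (n - 2) n) := by
  have hn1 : n - 2 + 1 = n - 1 := by omega
  by_cases C : ((arr (n - 2) (n - 1) ∧ arr (n - 2) n) ∨
      (arr (n - 1) (n - 2) ∧ arr n (n - 2)))
  · obtain ⟨hd2, hd3⟩ := hsame C
    have e2a : d'' (n-2) = 1 := by rw [hd2 (n-2), if_pos (by omega : r ≤ n-2 ∧ n-2 ≤ n-1)]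
    have e2b : d'' (n-1) = 1 := by rw [hd2 (n-1), if_pos (by omega : r ≤ n-1 ∧ n-1 ≤ n-1)]
    have e2c : d'' n = 0 := by rw [hd2 n, if_neg (by omega : ¬(r ≤ n ∧ n ≤ n-1))]
    have e3a : d''' (n-2) = 1 := by
      rw [hd3 (n-2), if_pos (by omega : (r ≤ n-2 ∧ n-2 ≤ n-2) ∨ n-2 = n)]
    have e3b : d''' (n-1) = 0 := by
      rw [hd3 (n-1), if_neg (by omega : ¬((r ≤ n-1 ∧ n-1 ≤ n-2) ∨ n-1 = n))]
    have e3c : d''' n = 1 := by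
      rw [hd3 n, if_pos (by omega : (r ≤ n ∧ n ≤ n-2) ∨ n = n)]
    have Bv2 := hv (n-2); rw [e2a] at Bv2
    have Bv1 := hv (n-1); rw [e2b] at Bv1
    have Bvn := hv n; rw [e2c] at Bvn
    have Bw2 := hw (n-2); rw [e3a] at Bw2
    have Bw1 := hw (n-1); rw [e3b] at Bw1
    have Bwn := hw n; rw [e3c] at Bwn
    have Ha2 := ha (n-2); have Ha1 := ha (n-1); have Han := ha n
    refine ⟨⟨?_, ?_, ?_, ?_⟩, ?_, ⟨?_, ?_⟩, ⟨?_, ?_⟩, ?_⟩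
    · intro i h1 h2
      have f1 : d'' i = 1 := by rw [hd2 i, if_pos (by omega : r ≤ i ∧ i ≤ n-1)]
      have f2 : d''' i = 1 := by
        rw [hd3 i, if_pos (by omega : (r ≤ i ∧ i ≤ n-2) ∨ i = n)]
      have g1 := hv i; rw [f1] at g1
      have g2 := hw i; rw [f2] at g2
      have g3 := ha i; omega
    · omega
    · omega
    · intro i h1 h2
      have f1 : d'' i = 0 := by rw [hd2 i, if_neg (by omega : ¬(r ≤ i ∧ i ≤ n-1))]
      have f2 : d''' i = 0 := by
        rw [hd3 i, if_neg (by omega : ¬((r ≤ i ∧ i ≤ n-2) ∨ i = n))]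
      have g1 := hv i; rw [f1] at g1
      have g2 := hw i; rw [f2] at g2
      have g3 := ha i; omega
    · intro i j hij h1 h2 h3 h4
      have f1 : d'' i = 1 := by rw [hd2 i, if_pos (by omega : r ≤ i ∧ i ≤ n-1)]
      have f2 : d'' j = 1 := by rw [hd2 j, if_pos (by omega : r ≤ j ∧ j ≤ n-1)]
      have f3 : d''' i = 1 := by
        rw [hd3 i, if_pos (by omega : (r ≤ i ∧ i ≤ n-2) ∨ i = n)]
      have f4 : d''' j = 1 := by
        rw [hd3 j, if_pos (by omega : (r ≤ j ∧ j ≤ n-2) ∨ j = n)]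
      have A1 : v i ≤ v j := acc_le (by omega) (hav i j hij)
      have A2 : w i ≤ w j := acc_le (by omega) (haw i j hij)
      have g1 := ha i; have g2 := ha j; omega
    · intro h1 h2
      have A2 : w (n-2) ≤ w n := acc_le (by omega) (haw _ _ h1)
      omega
    · intro h1 h2
      have A1 : v (n-2) ≤ v (n-1) := acc_le (by omega) (hav _ _ h1)
      omega
    · intro h1
      have A2 : w n ≤ w (n-2) := acc_le (by omega) (haw _ _ h1)
      omega
    · intro h1
      have A1 : v (n-1) ≤ v (n-2) := acc_le (by omega) (hav _ _ h1)
      omega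
    · rintro ⟨hc1, hc2⟩
      simp only [CritBetween, Critical] at hc1 hc2
      have t1 : arr (n-2) (n-1) ↔ ¬ arr (n-1) (n-2) := by
        have t := horient1 (n-2) (by omega) (by omega)
        rwa [hn1] at t
      rcases hc1 with ⟨har1, hk1⟩ | ⟨har1, hk1⟩ <;>
        rcases hc2 with ⟨har2, hk2⟩ | ⟨har2, hk2⟩
      · rcases hk1 with ⟨-, ha2, -, hb1⟩ | ⟨hbad, -, -, -⟩
        · rcases hk2 with ⟨-, -, -, hb2⟩ | ⟨hbad, -, -, -⟩
          · have A1 : v (n-2) ≤ v (n-1) := acc_le (by omega) (hav _ _ har1)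
            have A2 : w (n-2) ≤ w n := acc_le (by omega) (haw _ _ har2)
            omega
          · omega
        · omega
      · rcases C with ⟨-, hx⟩ | ⟨hx, -⟩
        · exact horient2.mp hx har2
        · exact t1.mp har1 hx
      · rcases C with ⟨hx, -⟩ | ⟨-, hx⟩
        · exact t1.mp hx har1
        · exact horient2.mp har2 hx
      · rcases hk1 with ⟨hbad, -, -, -⟩ | ⟨-, ha2, -, hb1⟩
        · omega
        · rcases hk2 with ⟨hbad, -, -, -⟩ | ⟨-, -, -, hb2⟩
          · omega
          · have A1 : v (n-1) ≤ v (n-2) := acc_le (by omega) (hav _ _ har1)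
            have A2 : w n ≤ w (n-2) := acc_le (by omega) (haw _ _ har2)
            omega
  · obtain ⟨hd2, hd3⟩ := hdiff C
    have e2a : d'' (n-2) = 1 := by rw [hd2 (n-2), if_pos (by omega : r ≤ n-2 ∧ n-2 ≤ n-2)]
    have e2b : d'' (n-1) = 0 := by rw [hd2 (n-1), if_neg (by omega : ¬(r ≤ n-1 ∧ n-1 ≤ n-2))]
    have e2c : d'' n = 0 := by rw [hd2 n, if_neg (by omega : ¬(r ≤ n ∧ n ≤ n-2))]
    have e3a : d''' (n-2) = 1 := by rw [hd3 (n-2), if_pos (by omega : r ≤ n-2 ∧ n-2 ≤ n)]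
    have e3b : d''' (n-1) = 1 := by rw [hd3 (n-1), if_pos (by omega : r ≤ n-1 ∧ n-1 ≤ n)]
    have e3c : d''' n = 1 := by rw [hd3 n, if_pos (by omega : r ≤ n ∧ n ≤ n)]
    have Bv2 := hv (n-2); rw [e2a] at Bv2
    have Bv1 := hv (n-1); rw [e2b] at Bv1
    have Bvn := hv n; rw [e2c] at Bvn
    have Bw2 := hw (n-2); rw [e3a] at Bw2
    have Bw1 := hw (n-1); rw [e3b] at Bw1
    have Bwn := hw n; rw [e3c] at Bwn
    have Ha2 := ha (n-2); have Ha1 := ha (n-1); have Han := ha n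
    refine ⟨⟨?_, ?_, ?_, ?_⟩, ?_, ⟨?_, ?_⟩, ⟨?_, ?_⟩, ?_⟩
    · intro i h1 h2
      have f1 : d'' i = 1 := by rw [hd2 i, if_pos (by omega : r ≤ i ∧ i ≤ n-2)]
      have f2 : d''' i = 1 := by rw [hd3 i, if_pos (by omega : r ≤ i ∧ i ≤ n)]
      have g1 := hv i; rw [f1] at g1
      have g2 := hw i; rw [f2] at g2
      have g3 := ha i; omega
    · omega
    · omega
    · intro i h1 h2
      have f1 : d'' i = 0 := by rw [hd2 i, if_neg (by omega : ¬(r ≤ i ∧ i ≤ n-2))]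
      have f2 : d''' i = 0 := by rw [hd3 i, if_neg (by omega : ¬(r ≤ i ∧ i ≤ n))]
      have g1 := hv i; rw [f1] at g1
      have g2 := hw i; rw [f2] at g2
      have g3 := ha i; omega
    · intro i j hij h1 h2 h3 h4
      have f1 : d'' i = 1 := by rw [hd2 i, if_pos (by omega : r ≤ i ∧ i ≤ n-2)]
      have f2 : d'' j = 1 := by rw [hd2 j, if_pos (by omega : r ≤ j ∧ j ≤ n-2)]
      have f3 : d''' i = 1 := by rw [hd3 i, if_pos (by omega : r ≤ i ∧ i ≤ n)]
      have f4 : d''' j = 1 := by rw [hd3 j, if_pos (by omega : r ≤ j ∧ j ≤ n)]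
      have A1 : v i ≤ v j := acc_le (by omega) (hav i j hij)
      have A2 : w i ≤ w j := acc_le (by omega) (haw i j hij)
      have g1 := ha i; have g2 := ha j; omega
    · intro h1 h2
      have A2 : w (n-2) ≤ w n := acc_le (by omega) (haw _ _ h1)
      omega
    · intro h1 h2
      have A2 : w (n-2) ≤ w (n-1) := acc_le (by omega) (haw _ _ h1)
      omega
    · intro h1
      have A2 : w n ≤ w (n-2) := acc_le (by omega) (haw _ _ h1)
      omega
    · intro h1
      have A2 : w (n-1) ≤ w (n-2) := acc_le (by omega) (haw _ _ h1)
      omega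
    · rintro ⟨hc1, hc2⟩
      simp only [CritBetween, Critical] at hc1 hc2
      rcases hc1 with ⟨har1, hk1⟩ | ⟨har1, hk1⟩ <;>
        rcases hc2 with ⟨har2, hk2⟩ | ⟨har2, hk2⟩
      · exact C (Or.inl ⟨har1, har2⟩)
      · rcases hk1 with ⟨-, ha2, -, hb1⟩ | ⟨hbad, -, -, -⟩
        · rcases hk2 with ⟨hbad, -, -, -⟩ | ⟨-, -, -, hb2⟩
          · omega
          · have A1 : w (n-2) ≤ w (n-1) := acc_le (by omega) (haw _ _ har1)
            have A2 : w n ≤ w (n-2) := acc_le (by omega) (haw _ _ har2)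
            omega
        · omega
      · rcases hk1 with ⟨hbad, -, -, -⟩ | ⟨-, ha2, -, hb1⟩
        · omega
        · rcases hk2 with ⟨-, -, -, hb2⟩ | ⟨hbad, -, -, -⟩
          · have A1 : w (n-1) ≤ w (n-2) := acc_le (by omega) (haw _ _ har1)
            have A2 : w (n-2) ≤ w n := acc_le (by omega) (haw _ _ har2)
            omega
          · omega
      · exact C (Or.inr ⟨har1, har2⟩)
end

section
/- Let Q⁰ be an acyclic quiver whose underlying undirected graph is the path 1—2—⋯—n, let r ∈ {1,…,n}, and set d'' = e_r+⋯+e_n ∈ ℤ^n. Fix a ∈ ℤ^n and let S_a be the set of all pairs (v, w) ∈ ℤ^n × ℤ^n with v + w = a, 0 ≤ v ≤ d'', 0 ≤ w ≤ d'', and such that every arrow of Q⁰ is acceptable with respect to (d'', v) and with respect to (d'', w). Let S be the induced subgraph of Q⁰ on the vertex set {i : a_i = 1}, let C(S) be the set of connected components of S, and set v⁰ = Σ_{i: a_i ≥ 1} e_i and w⁰ = Σ_{i: a_i = 2} e_i. If S_a is nonempty, then S_a = { (v⁰ − Σ_{C∈J} e_C, w⁰ + Σ_{C∈J} e_C) :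 J ⊆ C(S) }, where e_C = Σ_{i∈C} e_i. -/
/-- Description of the set `S_a` of decompositions `a = v + w` for an acyclic
orientation of the path `1 — 2 — ⋯ — n` and `d'' = e_r + ⋯ + e_n`: if `S_a` is
nonempty then its elements are exactly the pairs `(v⁰ − Σ_{C∈J} e_C, w⁰ + Σ_{C∈J} e_C)`
for `J` a subset of the set of connected components of the induced subgraph `S` of
`Q⁰` on `{i : a_i = 1}` (encoded by `c = Σ_{C∈J} e_C`, i.e. those `0/1`-vectors
supported on the vertices of `S` that are constant on each component). -/
theorem stmt_15 (n r : ℕ) (hr : 1 ≤ r) (hrn : r ≤ n)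
    (arr : ℕ → ℕ → Prop)
    (harr : ∀ i j, arr i j →
      (1 ≤ i ∧ i ≤ n - 1 ∧ j = i + 1) ∨ (1 ≤ j ∧ j ≤ n - 1 ∧ i = j + 1))
    (horient : ∀ i, 1 ≤ i → i ≤ n - 1 → (arr i (i + 1) ↔ ¬ arr (i + 1) i))
    (hacyc : ∀ i, ¬ Relation.TransGen arr i i)
    (d'' : ℕ → ℤ) (hd'' : ∀ i, d'' i = if r ≤ i ∧ i ≤ n then 1 else 0)
    (a : ℕ → ℤ)
    (Sa : Set ((ℕ → ℤ) × (ℕ → ℤ)))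
    (hSa : Sa = {p | (∀ i, p.1 i + p.2 i = a i) ∧
      (∀ i, 0 ≤ p.1 i ∧ p.1 i ≤ d'' i) ∧ (∀ i, 0 ≤ p.2 i ∧ p.2 i ≤ d'' i) ∧
      AcceptableAll arr d'' p.1 ∧ AcceptableAll arr d'' p.2})
    (hne : Sa.Nonempty) :
    Sa = {p | ∃ c : ℕ → ℤ,
      (∀ i, c i = 0 ∨ c i = 1) ∧
      (∀ i, c i = 1 → a i = 1) ∧
      (∀ i, 1 ≤ i → i + 1 ≤ n → a i = 1 → a (i + 1) = 1 → c i = c (i + 1)) ∧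
      p = (fun i => (if 1 ≤ a i then 1 else 0) - c i,
           fun i => (if a i = 2 then 1 else 0) + c i)} := by
  obtain ⟨⟨v0, w0⟩, hmem⟩ := hne
  rw [hSa] at hmem
  obtain ⟨h0sum, h0v, h0w, h0av, h0aw⟩ := hmem
  simp only at h0sum h0v h0w h0av h0aw
  have hd01 : ∀ i, d'' i = 0 ∨ d'' i = 1 := by
    intro i; rw [hd'' i]; split
    · exact Or.inr rfl
    · exact Or.inl rfl
  have ha012 : ∀ i, 0 ≤ a i ∧ a i ≤ 2 * d'' i := by
    intro i
    have h1 := h0sum i; have h2 := h0v i; have h3 := h0w i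
    constructor <;> omega
  have had : ∀ i, 1 ≤ a i → d'' i = 1 := by
    intro i hi
    have h1 := ha012 i; have h2 := hd01 i; omega
  have hkey : ∀ i j, arr i j → d'' i = 1 → d'' j = 1 → a i ≤ a j := by
    intro i j hij hdi hdj
    have h1 := h0av i j hij
    have h2 := h0aw i j hij
    rw [hdi, hdj] at h1 h2
    norm_num at h1 h2
    have h3 := h0sum i; have h4 := h0sum j
    omega
  rw [hSa]
  ext ⟨v, w⟩
  simp only [Set.mem_setOf_eq]
  constructor
  · rintro ⟨hsum, hv, hw, hav, haw⟩
    refine ⟨fun i => w i - (if a i = 2 then 1 else 0), ?_, ?_, ?_, ?_⟩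
    · intro i
      have h1 := hsum i; have h2 := hv i; have h3 := hw i; have h4 := hd01 i
      simp only
      split <;> omega
    · intro i hci
      have h1 := hsum i; have h2 := hv i; have h3 := hw i; have h4 := hd01 i
      simp only at hci
      split at hci <;> omega
    · intro i hi1 hin hai haj
      have hdi : d'' i = 1 := had i (by omega)
      have hdj : d'' (i + 1) = 1 := had (i + 1) (by omega)
      have h1 := hsum i; have h2 := hsum (i + 1)
      have hvw : (v i - v (i+1) ≤ 0 ∧ w i - w (i+1) ≤ 0) ∨
                 (v (i+1) - v i ≤ 0 ∧ w (i+1) - w i ≤ 0) := by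
        by_cases harw : arr i (i + 1)
        · left
          have ha1 := hav i (i+1) harw
          have ha2 := haw i (i+1) harw
          rw [hdi, hdj] at ha1 ha2
          norm_num at ha1 ha2
          exact ⟨by omega, by omega⟩
        · right
          have harw' : arr (i + 1) i := by
            have := horient i hi1 (by omega)
            tauto
          have ha1 := hav (i+1) i harw'
          have ha2 := haw (i+1) i harw'
          rw [hdi, hdj] at ha1 ha2
          norm_num at ha1 ha2
          exact ⟨by omega, by omega⟩
      simp only [hai, haj]
      norm_num
      omega
    · have hve : v = fun i => (if 1 ≤ a i then 1 else 0) -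
          (w i - if a i = 2 then 1 else 0) := by
        funext i
        have h1 := hsum i; have h2 := hv i; have h3 := hw i; have h4 := hd01 i
        split <;> split <;> omega
      have hwe : w = fun i => (if a i = 2 then 1 else 0) +
          (w i - if a i = 2 then 1 else 0) := by
        funext i; ring
      exact Prod.ext hve hwe
  · rintro ⟨c, hc01, hc1, hconst, hp⟩
    rw [Prod.ext_iff] at hp
    obtain ⟨hpv, hpw⟩ := hp
    simp only at hpv hpw
    have hvdef : ∀ i, v i = (if 1 ≤ a i then 1 else 0) - c i := fun i => congrFun hpv i
    have hwdef : ∀ i, w i = (if a i = 2 then 1 else 0) + c i := fun i => congrFun hpw i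
    have hc : ∀ i, c i = 0 ∨ (c i = 1 ∧ a i = 1) :=
      fun i => (hc01 i).imp id (fun h => ⟨h, hc1 i h⟩)
    have hai3 : ∀ i, a i = 0 ∨ a i = 1 ∨ a i = 2 := by
      intro i; have h1 := ha012 i; have h2 := hd01 i; omega
    have hvb : ∀ i, 0 ≤ v i ∧ v i ≤ d'' i := by
      intro i
      rw [hvdef i]
      have h1 := ha012 i; have h2 := hd01 i
      rcases hc i with h | ⟨h, h'⟩ <;> split <;> omega
    have hwb : ∀ i, 0 ≤ w i ∧ w i ≤ d'' i := by
      intro i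
      rw [hwdef i]
      have h1 := ha012 i; have h2 := hd01 i
      rcases hc i with h | ⟨h, h'⟩ <;> split <;> omega
    have hceq : ∀ i j, arr i j → a i = 1 → a j = 1 → c i = c j := by
      intro i j hij hai haj
      rcases harr i j hij with ⟨h1, h2, rfl⟩ | ⟨h1, h2, rfl⟩
      · exact hconst i h1 (by omega) hai haj
      · exact (hconst j h1 (by omega) haj hai).symm
    refine ⟨?_, hvb, hwb, ?_, ?_⟩
    · intro i
      rw [hvdef i, hwdef i]
      rcases hai3 i with h | h | h <;> rw [h] <;> norm_num
    · intro i j hij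
      rcases hd01 i with hdi | hdi
      · have hb := hvb i; have hb' := hvb j
        have : v i - v j ≤ 0 := by omega
        exact le_trans this (le_max_right _ _)
      · rcases hd01 j with hdj | hdj
        · have hb := hvb i; have hb' := hvb j
          have : v i - v j ≤ d'' i - d'' j := by omega
          exact le_trans this (le_max_left _ _)
        · have hmax : max (d'' i - d'' j) 0 = 0 := by rw [hdi, hdj]; norm_num
          rw [hmax]
          have hkij := hkey i j hij hdi hdj
          rcases hai3 i with h | h | h <;> rcases hai3 j with h' | h' | h' <;>
              rw [hvdef i, hvdef j, h, h'] <;> norm_num <;>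
              [skip; skip; skip; skip; skip; skip; skip; skip; skip]
          all_goals (
            first
              | (have hcc := hceq i j hij h h'; omega)
              | (rcases hc i with hh | ⟨hh, hh'⟩ <;> rcases hc j with hg | ⟨hg, hg'⟩ <;> omega))
    · intro i j hij
      rcases hd01 i with hdi | hdi
      · have hb := hwb i; have hb' := hwb j
        have : w i - w j ≤ 0 := by omega
        exact le_trans this (le_max_right _ _)
      · rcases hd01 j with hdj | hdj
        · have hb := hwb i; have hb' := hwb j
          have : w i - w j ≤ d'' i - d'' j := by omega
          exact le_trans this (le_max_left _ _)
        · have hmax : max (d'' i - d'' j) 0 = 0 := by rw [hdi, hdj]; norm_num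
          rw [hmax]
          have hkij := hkey i j hij hdi hdj
          rcases hai3 i with h | h | h <;> rcases hai3 j with h' | h' | h' <;>
              rw [hwdef i, hwdef j, h, h'] <;> norm_num
          all_goals (
            first
              | (have hcc := hceq i j hij h h'; omega)
              | (rcases hc i with hh | ⟨hh, hh'⟩ <;> rcases hc j with hg | ⟨hg, hg'⟩ <;> omega))
end
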